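/- arXiv:1903.06968 — 4 statements merged into one kernel-verified Lean document; each statement's English description precedes it below -/
import Mathlib

section
/- Let α, β, γ > 0, p, q positive integers, and m a positive integer, and let h_β(x) = β + (α/(2π))(1 + sin(2πx)). If the sequence (x_n) satisfies x_{n+1} = x_n + h_β(x_n) + (1/γ)·h_β(x_{n+1}) for all n and x_{n+q} = x_n + p for all n, then there exists a sequence (y_n) satisfying y_{n+1} = y_n + h_{β̃}(y_n) + (1/γ)·h_{β̃}(y_{n+1}) with β̃ = β + m·γ/(1+γ) and y_{n+q} = y_n + p + m·q for all n. -/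
open Real

/-- `hb α β x` is the upper threshold of the STS with parameters `α, β`. -/
noncomputable def hb (α β x : ℝ) : ℝ := β + α / (2 * π) * (1 + Real.sin (2 * π * x))

theorem stmt_3 (α β γ : ℝ) (hα : 0 < α) (hβ : 0 < β) (hγ : 0 < γ)
    (p q m : ℕ) (hp : 0 < p) (hq : 0 < q) (hm : 0 < m)
    (x : ℕ → ℝ)
    (hrec : ∀ n, x (n + 1) = x n + hb α β (x n) + (1 / γ) * hb α β (x (n + 1)))
    (hper : ∀ n, x (n + q) = x n + p) :
    ∃ y : ℕ → ℝ,
      (∀ n, y (n + 1) = y n + hb α (β + m * γ / (1 + γ)) (y n)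
          + (1 / γ) * hb α (β + m * γ / (1 + γ)) (y (n + 1))) ∧
      (∀ n, y (n + q) = y n + p + m * q) := by
  have hγ1 : (1 : ℝ) + γ ≠ 0 := by positivity
  have hγ0 : γ ≠ 0 := ne_of_gt hγ
  have hbshift : ∀ (z : ℝ) (k : ℕ),
      hb α (β + m * γ / (1 + γ)) (z + k * m) = hb α β z + m * γ / (1 + γ) := by
    intro z k
    have : Real.sin (2 * π * (z + (k * m : ℕ))) = Real.sin (2 * π * z) := by
      push_cast
      rw [show 2 * π * (z + (k : ℝ) * m) = 2 * π * z + (k * m : ℤ) * (2 * π) by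
        push_cast; ring]
      exact Real.sin_add_int_mul_two_pi _ _
    unfold hb
    push_cast at this ⊢
    rw [this]
    ring
  refine ⟨fun n => x n + n * m, fun n => ?_, fun n => ?_⟩
  · have h1 := hbshift (x n) n
    have h2 := hbshift (x (n + 1)) (n + 1)
    push_cast at h1 h2 ⊢
    have key : (m:ℝ) * γ / (1 + γ) + (1 / γ) * ((m:ℝ) * γ / (1 + γ)) = m := by
      field_simp
      ring
    rw [h1, h2, mul_add]
    linarith [hrec n]
  · have := hper n
    push_cast
    rw [this]
    push_cast
    ring
end

section
/- Define q* ∈ (0,1) as a solution of 1 + √(1 − q²) = q·(π/2 + arccos(q)). Then such a solution exists and is unique in the open interval (0,1). -/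
open Real Set

/- The equation says `f q = 1` for `f q = q (π/2 + arccos q) - √(1 - q²)`.
Since `q arccos q - √(1 - q²)` is a primitive of `arccos`, `f' = π/2 + arccos > 0`, so `f` increases
strictly on `[-1, 1]`; it runs from `-1` at `q = 0` to `π/2 > 1` at `q = 1`, hence takes the value
`1` exactly once in `(0, 1)`. -/

theorem hasDerivAt_mul_arccos_sub_sqrt {x : ℝ} (h₁ : -1 < x) (h₂ : x < 1) :
    HasDerivAt (fun q => q * arccos q - √(1 - q ^ 2)) (arccos x) x := by
  have hpos : 0 < 1 - x ^ 2 := by nlinarith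
  have hsqrt : √(1 - x ^ 2) ≠ 0 := (sqrt_pos.2 hpos).ne'
  have hsq : HasDerivAt (fun q => 1 - q ^ 2) (-(2 * x)) x := by
    simpa using (hasDerivAt_pow 2 x).const_sub 1
  refine (((hasDerivAt_id' x).mul (hasDerivAt_arccos h₁.ne' h₂.ne)).sub
    (hsq.sqrt hpos.ne')).congr_deriv ?_
  field_simp
  ring

theorem strictMonoOn_mul_pi_div_two_add_arccos_sub_sqrt :
    StrictMonoOn (fun q => q * (π / 2 + arccos q) - √(1 - q ^ 2)) (Icc (-1) 1) := by
  have hsplit : (fun q => q * (π / 2 + arccos q) - √(1 - q ^ 2)) =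
      fun q => π / 2 * q + (q * arccos q - √(1 - q ^ 2)) := by
    ext q
    ring
  refine strictMonoOn_of_hasDerivWithinAt_pos (convex_Icc _ _) (by fun_prop)
    (f' := fun x => π / 2 + arccos x) (fun x hx => ?_) (fun x _ => ?_)
  · rw [interior_Icc] at hx
    rw [hsplit]
    exact (((hasDerivAt_id' x).const_mul (π / 2)).add
      (hasDerivAt_mul_arccos_sub_sqrt hx.1 hx.2)).hasDerivWithinAt.congr_deriv (by ring)
  · have := arccos_nonneg x
    positivity

theorem stmt_6 :
    ∃! q : ℝ, q ∈ Set.Ioo (0 : ℝ) 1 ∧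
      1 + Real.sqrt (1 - q ^ 2) = q * (π / 2 + Real.arccos q) := by
  set f := fun q : ℝ => q * (π / 2 + arccos q) - √(1 - q ^ 2)
  have hf : StrictMonoOn f (Icc (-1) 1) := strictMonoOn_mul_pi_div_two_add_arccos_sub_sqrt
  have hcont : ContinuousOn f (Icc 0 1) := by fun_prop
  have heq (q : ℝ) : 1 + √(1 - q ^ 2) = q * (π / 2 + arccos q) ↔ f q = 1 :=
    eq_comm.trans sub_eq_iff_eq_add.symm
  have hmem : (1 : ℝ) ∈ Ioo (f 0) (f 1) := by
    simp only [f, arccos_one]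
    norm_num
    linarith [pi_gt_three]
  obtain ⟨q, hq, hfq⟩ := intermediate_value_Ioo zero_le_one hcont hmem
  refine ⟨q, ⟨hq, (heq q).2 hfq⟩, fun y ⟨hy, hfy⟩ => ?_⟩
  have hIoo : Ioo (0 : ℝ) 1 ⊆ Icc (-1) 1 :=
    Ioo_subset_Icc_self.trans (Icc_subset_Icc_left (by norm_num))
  exact hf.injOn (hIoo hy) (hIoo hq) (((heq y).1 hfy).trans hfq.symm)
end

section
/- Fix b ∈ (0,1) and c with 0 ≤ c < b, and let F₂(x, a) = a + 2(b − c) + (2c − b)x + 2(c − b)√(1 − x). A point x ∈ (0,1) is a fixed point of F₂(·, a) with ∂F₂/∂x(x, a) = 1 if and only if a = 1 − b + (b − c)²/(1 + b − 2c). -/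
/-!
Substituting `s = √(1 - x)`, which maps `(0, 1)` onto itself, the fixed-point equation reads
`a = 1 - b + 2 (b - c) s - (1 + b - 2c) s²` and the fold condition `F₂' = 1` reads
`(1 + b - 2c) s = b - c`. So the fold sits at the critical point of this quadratic in `s`,
and `a` is its maximum value `1 - b + (b - c)² / (1 + b - 2c)`.
-/

open Real Set

lemma exists_mem_Ioo_iff_exists_one_sub_sq {P : ℝ → Prop} :
    (∃ x ∈ Ioo (0 : ℝ) 1, P x) ↔ ∃ s ∈ Ioo (0 : ℝ) 1, P (1 - s ^ 2) := by
  constructor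
  · rintro ⟨x, ⟨hx0, hx1⟩, hP⟩
    refine ⟨√(1 - x), ⟨sqrt_pos.2 (by linarith), ?_⟩, ?_⟩
    · exact (sqrt_lt' one_pos).2 (by linarith)
    · rwa [sq_sqrt (by linarith), sub_sub_cancel]
  · rintro ⟨s, ⟨hs0, hs1⟩, hP⟩
    exact ⟨1 - s ^ 2, ⟨by nlinarith, by nlinarith⟩, hP⟩

lemma sqrt_one_sub_one_sub_sq {s : ℝ} (hs : 0 ≤ s) : √(1 - (1 - s ^ 2)) = s := by
  rw [sub_sub_cancel, sqrt_sq hs]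

lemma hasDerivAt_affine_add_mul_sqrt_one_sub (α β γ : ℝ) {x : ℝ} (hx : x < 1) :
    HasDerivAt (fun y => α + β * y + γ * √(1 - y)) (β - γ / (2 * √(1 - x))) x := by
  have hsqrt : HasDerivAt (fun y => √(1 - y)) (1 / (2 * √(1 - x)) * (-1)) x :=
    (hasDerivAt_sqrt (by linarith)).comp x ((hasDerivAt_id x).const_sub 1)
  have h : HasDerivAt (fun y => α + β * y + γ * √(1 - y))
      (β * 1 + γ * (1 / (2 * √(1 - x)) * (-1))) x :=
    (((hasDerivAt_id' x).const_mul β).const_add α).add (hsqrt.const_mul γ)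
  exact h.congr_deriv (by ring)

lemma fixedPoint_and_fold_iff {a b c s : ℝ} (hs : 0 < s) (hD : 0 < 1 + b - 2 * c) :
    (a + 2 * (b - c) + (2 * c - b) * (1 - s ^ 2) + 2 * (c - b) * s = 1 - s ^ 2 ∧
        2 * c - b - 2 * (c - b) / (2 * s) = 1) ↔
      s = (b - c) / (1 + b - 2 * c) ∧ a = 1 - b + (b - c) ^ 2 / (1 + b - 2 * c) := by
  have hfold : 2 * c - b - 2 * (c - b) / (2 * s) = 1 ↔ s * (1 + b - 2 * c) = b - c := by
    rw [sub_eq_iff_eq_add', ← sub_eq_iff_eq_add, eq_comm, div_eq_iff (by positivity)]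
    constructor <;> intro h
    · linear_combination h / 2
    · linear_combination 2 * h
  have hfix : a + 2 * (b - c) + (2 * c - b) * (1 - s ^ 2) + 2 * (c - b) * s = 1 - s ^ 2 ↔
      a = 1 - b + 2 * (b - c) * s - (1 + b - 2 * c) * s ^ 2 := by
    constructor <;> intro h <;> linear_combination h
  rw [and_comm, hfold, ← eq_div_iff hD.ne', and_congr_right_iff, hfix]
  rintro rfl
  have hvertex : 1 - b + 2 * (b - c) * ((b - c) / (1 + b - 2 * c)) -
      (1 + b - 2 * c) * ((b - c) / (1 + b - 2 * c)) ^ 2 = 1 - b + (b - c) ^ 2 / (1 + b - 2 * c) := by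
    field_simp
    ring
  rw [hvertex]

theorem stmt_8_general (b c : ℝ) (hb : b ∈ Set.Ioo (0 : ℝ) 1) (hcb : c < b)
    (F : ℝ → ℝ → ℝ)
    (hF : ∀ a x, F a x = a + 2 * (b - c) + (2 * c - b) * x + 2 * (c - b) * Real.sqrt (1 - x))
    (a : ℝ) :
    (∃ x ∈ Set.Ioo (0 : ℝ) 1, F a x = x ∧ deriv (F a) x = 1) ↔
      a = 1 - b + (b - c) ^ 2 / (1 + b - 2 * c) := by
  have hD : 0 < 1 + b - 2 * c := by linarith [hb.2]
  have hs₀ : (b - c) / (1 + b - 2 * c) ∈ Ioo (0 : ℝ) 1 :=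
    ⟨div_pos (by linarith) hD, (div_lt_one hD).2 (by linarith [hb.2])⟩
  rw [show F a = _ from funext (hF a), exists_mem_Ioo_iff_exists_one_sub_sq]
  calc (∃ s ∈ Ioo (0 : ℝ) 1, _)
      ↔ ∃ s ∈ Ioo (0 : ℝ) 1, s = (b - c) / (1 + b - 2 * c) ∧
          a = 1 - b + (b - c) ^ 2 / (1 + b - 2 * c) := by
        refine exists_congr fun s => and_congr_right fun hs => ?_
        rw [(hasDerivAt_affine_add_mul_sqrt_one_sub _ _ _ (sub_lt_self 1 (pow_pos hs.1 2))).deriv]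
        dsimp only
        rw [sqrt_one_sub_one_sub_sq hs.1.le]
        exact fixedPoint_and_fold_iff (a := a) hs.1 hD
    _ ↔ _ := ⟨fun ⟨_, _, _, ha⟩ => ha, fun ha => ⟨_, hs₀, rfl, ha⟩⟩

theorem stmt_8 (b c : ℝ) (hb : b ∈ Set.Ioo (0 : ℝ) 1) (hc : 0 ≤ c) (hcb : c < b)
    (F : ℝ → ℝ → ℝ)
    (hF : ∀ a x, F a x = a + 2 * (b - c) + (2 * c - b) * x + 2 * (c - b) * Real.sqrt (1 - x))
    (a : ℝ) :
    (∃ x ∈ Set.Ioo (0 : ℝ) 1, F a x = x ∧ deriv (F a) x = 1) ↔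
      a = 1 - b + (b - c) ^ 2 / (1 + b - 2 * c) :=
  stmt_8_general b c hb hcb F hF a
end

section
/- Let n ≥ 2, b ∈ (0,1), and c₁ with 0 < c₁ ≤ n/(n−1). Then for all x ∈ (0,1), F_n'(x) = (b/(2√(1−x)))·(c₁ + (1 − c₁)·n·(√(1−x))^{n−1}) > 0; hence F_n is strictly increasing on (0,1). -/
/-!
Writing `t = √(1 - x)`, the map is a polynomial in `t`, and the chain rule with
`dt/dx = -1/(2t)` gives the stated derivative. Its sign is that of
`c₁ + (1 - c₁) n t^(n-1)`: for `c₁ ≤ 1` both terms are nonnegative and `c₁ > 0`, while for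
`c₁ > 1` the factor decreases in `t` and exceeds its value `n - c₁ (n - 1) ≥ 0` at `t = 1`.
-/

open Real Set

lemma hasDerivAt_sqrt_one_sub {x : ℝ} (hx : x < 1) :
    HasDerivAt (fun y => √(1 - y)) (-1 / (2 * √(1 - x))) x :=
  ((hasDerivAt_id x).const_sub 1).sqrt (sub_pos.mpr hx).ne'

lemma hasDerivAt_canonicalMap (n : ℕ) (a b c : ℝ) {x : ℝ} (hx : x < 1) :
    HasDerivAt (fun y => a + b * (1 - c * √(1 - y) + (c - 1) * √(1 - y) ^ n))
      (b / (2 * √(1 - x)) * (c + (1 - c) * n * √(1 - x) ^ (n - 1))) x := by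
  have hpoly : HasDerivAt (fun t : ℝ => a + b * (1 - c * t + (c - 1) * t ^ n))
      (b * (-c + (c - 1) * (n * √(1 - x) ^ (n - 1)))) (√(1 - x)) := by
    simpa using ((((hasDerivAt_id _).const_mul c).const_sub 1).add
      ((hasDerivAt_pow n _).const_mul (c - 1))).const_mul b |>.const_add a
  refine (hpoly.comp x (hasDerivAt_sqrt_one_sub hx)).congr_deriv ?_
  ring

lemma canonicalFactor_pos {n : ℕ} {c t : ℝ} (hc : 0 < c) (hcn : c ≤ n / (n - 1 : ℝ))
    (ht₀ : 0 ≤ t) (ht₁ : t < 1) : 0 < c + (1 - c) * n * t ^ (n - 1) := by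
  rcases le_or_gt c 1 with hc1 | hc1
  · have : 0 ≤ (1 - c) * n * t ^ (n - 1) := by
      have := sub_nonneg.mpr hc1
      positivity
    linarith
  · -- `n / (n - 1) > 1` forces `n ≥ 2`
    have hn1 : (0 : ℝ) < n - 1 := by
      by_contra! h
      linarith [div_nonpos_of_nonneg_of_nonpos (Nat.cast_nonneg n) h]
    have hn : n - 1 ≠ 0 := by
      have : 1 < n := by exact_mod_cast (by linarith : (1 : ℝ) < n)
      omega
    have hcn' : c * (n - 1) ≤ n := (le_div_iff₀ hn1).mp hcn
    have hpow : (c - 1) * n * t ^ (n - 1) < (c - 1) * n :=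
      mul_lt_of_lt_one_right (mul_pos (sub_pos.mpr hc1) (by linarith)) (pow_lt_one₀ ht₀ ht₁ hn)
    linarith

theorem stmt_10_general (n : ℕ) (a b c₁ : ℝ)
    (hb : b ∈ Set.Ioo (0 : ℝ) 1) (hc₁ : 0 < c₁) (hc₁' : c₁ ≤ n / (n - 1 : ℝ))
    (F : ℝ → ℝ)
    (hF : ∀ x, F x = a + b * (1 - c₁ * Real.sqrt (1 - x)
        + (c₁ - 1) * (Real.sqrt (1 - x)) ^ n)) :
    (∀ x ∈ Set.Ioo (0 : ℝ) 1,
      deriv F x = (b / (2 * Real.sqrt (1 - x)))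
          * (c₁ + (1 - c₁) * n * (Real.sqrt (1 - x)) ^ (n - 1)) ∧
      0 < deriv F x) ∧
    StrictMonoOn F (Set.Ioo 0 1) := by
  set F' := fun x => b / (2 * √(1 - x)) * (c₁ + (1 - c₁) * n * √(1 - x) ^ (n - 1))
  have hderiv : ∀ x ∈ Ioo (0 : ℝ) 1, HasDerivAt F (F' x) x := fun x hx => by
    rw [funext hF]
    exact hasDerivAt_canonicalMap n a b c₁ hx.2
  have hpos : ∀ x ∈ Ioo (0 : ℝ) 1, 0 < F' x := fun x hx => by
    have hs : 0 < √(1 - x) := sqrt_pos.mpr (sub_pos.mpr hx.2)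
    have hs₁ : √(1 - x) < 1 := (sqrt_lt' one_pos).mpr (by linarith [hx.1])
    have hfactor := canonicalFactor_pos hc₁ hc₁' hs.le hs₁
    have hb₀ := hb.1
    positivity
  refine ⟨fun x hx => ⟨(hderiv x hx).deriv, (hderiv x hx).deriv ▸ hpos x hx⟩, ?_⟩
  refine strictMonoOn_of_hasDerivWithinAt_pos (f' := F') (convex_Ioo 0 1)
    (fun x hx => (hderiv x hx).continuousAt.continuousWithinAt) (fun x hx => ?_) ?_
  · rw [interior_Ioo] at hx ⊢
    exact (hderiv x hx).hasDerivWithinAt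
  · simpa only [interior_Ioo] using hpos

theorem stmt_10 (n : ℕ) (hn : 2 ≤ n) (a b c₁ : ℝ)
    (hb : b ∈ Set.Ioo (0 : ℝ) 1) (hc₁ : 0 < c₁) (hc₁' : c₁ ≤ n / (n - 1 : ℝ))
    (F : ℝ → ℝ)
    (hF : ∀ x, F x = a + b * (1 - c₁ * Real.sqrt (1 - x)
        + (c₁ - 1) * (Real.sqrt (1 - x)) ^ n)) :
    (∀ x ∈ Set.Ioo (0 : ℝ) 1,
      deriv F x = (b / (2 * Real.sqrt (1 - x)))
          * (c₁ + (1 - c₁) * n * (Real.sqrt (1 - x)) ^ (n - 1)) ∧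
      0 < deriv F x) ∧
    StrictMonoOn F (Set.Ioo 0 1) :=
  stmt_10_general n a b c₁ hb hc₁ hc₁' F hF
end
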